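/- arXiv:1802.06023 — 5 statements merged into one kernel-verified Lean document; each statement's English description precedes it below -/
import Mathlib

section
/- Let R be a connected graded k-algebra with augmentation ideal m = R_{\ge 1}, and let S be a finite-dimensional simple left R-module with mS \ne 0. If n \ge 1 is such that R_1 S + R_2 S + \cdots + R_n S = S, then for every i \ge 0 one has R_{i+1} S + R_{i+2} S + \cdots + R_{i+n} S = S. -/
/-- The `k`-subspace `R_d · S` of `S` spanned by products of degree-`d` elements of `R`
with elements of `S`. -/
def pieceSmul {k R : Type} [Field k] [Ring R] [Algebra k R]
    (𝒜 : ℕ → Submodule k R) (S : Type) [AddCommGroup S] [Module R S] [Module k S]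
    (d : ℕ) : Submodule k S :=
  Submodule.span k {x : S | ∃ a ∈ 𝒜 d, ∃ s : S, x = a • s}

/-! Multiplying `S = R_1 S + ⋯ + R_n S` by `R_d` gives
`R_d S ⊆ R_{d+1} S + ⋯ + R_{d+n} S`, so the lowest piece of a generating window
`R_{i+1} S + ⋯ + R_{i+n} S` can be traded for higher ones and the window slides up by one. -/

section

variable {k R S : Type} [Field k] [Ring R] [Algebra k R] (𝒜 : ℕ → Submodule k R)
  [SetLike.GradedMonoid 𝒜] [AddCommGroup S] [Module R S] [Module k S] [IsScalarTower k R S]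

theorem map_smul_pieceSmul_le {a : R} {d : ℕ} (ha : a ∈ 𝒜 d) (l : ℕ) :
    (pieceSmul 𝒜 S l).map (DistribSMul.toLinearMap k S a) ≤ pieceSmul 𝒜 S (d + l) := by
  rw [pieceSmul, Submodule.map_span, Submodule.span_le]
  rintro _ ⟨_, ⟨b, hb, t, rfl⟩, rfl⟩
  exact Submodule.subset_span ⟨a * b, SetLike.mul_mem_graded ha hb, t, (mul_smul a b t).symm⟩

theorem pieceSmul_le_iSup_of_iSup_eq_top {s : Finset ℕ}
    (hs : ⨆ j ∈ s, pieceSmul 𝒜 S j = ⊤) (d : ℕ) :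
    pieceSmul 𝒜 S d ≤ ⨆ j ∈ s, pieceSmul 𝒜 S (d + j) := by
  rw [pieceSmul, Submodule.span_le]
  rintro _ ⟨a, ha, x, rfl⟩
  have hx : x ∈ ⨆ j ∈ s, pieceSmul 𝒜 S j := hs ▸ Submodule.mem_top
  have hax := Submodule.mem_map_of_mem (f := DistribSMul.toLinearMap k S a) hx
  simp only [Submodule.map_iSup] at hax
  exact iSup₂_mono (fun l _ => map_smul_pieceSmul_le 𝒜 ha l) hax

theorem iSup_pieceSmul_Icc_succ_eq_top {n i : ℕ}
    (hgen : ⨆ j ∈ Finset.Icc 1 n, pieceSmul 𝒜 S j = ⊤)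
    (hi : ⨆ j ∈ Finset.Icc (i + 1) (i + n), pieceSmul 𝒜 S j = ⊤) :
    ⨆ j ∈ Finset.Icc (i + 1 + 1) (i + 1 + n), pieceSmul 𝒜 S j = ⊤ := by
  refine top_unique (hi ▸ iSup₂_le fun j hj => ?_)
  rw [Finset.mem_Icc] at hj
  rcases hj.1.eq_or_lt with rfl | hlt
  · refine (pieceSmul_le_iSup_of_iSup_eq_top 𝒜 hgen (i + 1)).trans
      (iSup₂_le fun l hl => le_iSup₂_of_le (i + 1 + l) ?_ le_rfl)
    rw [Finset.mem_Icc] at hl ⊢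
    omega
  · exact le_iSup₂_of_le j (Finset.mem_Icc.2 ⟨hlt, by omega⟩) le_rfl

end

theorem stmt0_general {k R S : Type} [Field k] [Ring R] [Algebra k R]
    (𝒜 : ℕ → Submodule k R) [GradedAlgebra 𝒜]
    [AddCommGroup S] [Module R S] [Module k S] [IsScalarTower k R S]
    (n : ℕ)
    (hgen : (⨆ j ∈ Finset.Icc 1 n, pieceSmul 𝒜 S j) = (⊤ : Submodule k S)) :
    ∀ i : ℕ, (⨆ j ∈ Finset.Icc (i + 1) (i + n), pieceSmul 𝒜 S j) = (⊤ : Submodule k S) := by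
  intro i
  induction i with
  | zero => simpa using hgen
  | succ i ih => exact iSup_pieceSmul_Icc_succ_eq_top 𝒜 hgen ih

/-- over a connected graded `k`-algebra `R`, if `S` is a finite-dimensional
simple left `R`-module with `mS ≠ 0` and `R_1 S + ⋯ + R_n S = S` for some `n ≥ 1`, then
`R_{i+1} S + ⋯ + R_{i+n} S = S` for every `i ≥ 0`. -/
theorem stmt0 {k R S : Type} [Field k] [Ring R] [Algebra k R]
    (𝒜 : ℕ → Submodule k R) [GradedAlgebra 𝒜]
    (hconn : 𝒜 0 = (1 : Submodule k R))
    [AddCommGroup S] [Module R S] [Module k S] [IsScalarTower k R S]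
    [IsSimpleModule R S] [FiniteDimensional k S]
    (hnt : ∃ (i : ℕ) (a : R), 0 < i ∧ a ∈ 𝒜 i ∧ ∃ x : S, a • x ≠ 0)
    (n : ℕ) (hn : 1 ≤ n)
    (hgen : (⨆ j ∈ Finset.Icc 1 n, pieceSmul 𝒜 S j) = (⊤ : Submodule k S)) :
    ∀ i : ℕ, (⨆ j ∈ Finset.Icc (i + 1) (i + n), pieceSmul 𝒜 S j) = (⊤ : Submodule k S) :=
  stmt0_general 𝒜 n hgen
end

section
/- Let R be a connected graded k-algebra, S a non-trivial finite-dimensional simple left R-module, and \pi : S~ \to S the map \pi(s \otimes t^j) = s. Then \pi is an R-module homomorphism with the universal property: for every graded left R-module M with M_{<0} = 0 and every R-module homomorphism \psi : M \to S, there exists a unique degree-zero graded homomorphism \tilde\psi : M \to S~ with \psi = \pi \circ \tilde\psi. -/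
/-!
As a `k`-space `S~` is the internal direct sum of the copies `ι j S`, so a `k`-linear map out of
a graded space may be prescribed degreewise: `π` inverts each `ι j`, and `ψ'` sends `x ∈ M_j`
to `ι j (ψ x)`. Both maps are `R`-linear because it suffices to check this on homogeneous
`a ∈ R_i` and homogeneous vectors, where the shift `ι j ↦ ι (i + j)` on `S~` matches the grading
of `M`. Uniqueness holds because `π` is injective on each `ι j S`, which forces the value of
`ψ'` on `M_j`.
-/

namespace DirectSum.IsInternal

variable {ι k V W : Type*} [DecidableEq ι] [Semiring k] [AddCommMonoid V] [Module k V]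
  [AddCommMonoid W] [Module k W] {A : ι → Submodule k V}

noncomputable def lift (h : IsInternal A) (f : ∀ i, A i →ₗ[k] W) : V →ₗ[k] W :=
  toModule k ι W f ∘ₗ (LinearEquiv.ofBijective (coeLinearMap A) h).symm.toLinearMap

theorem lift_apply_of_mem (h : IsInternal A) (f : ∀ i, A i →ₗ[k] W) {i : ι} {x : V}
    (hx : x ∈ A i) : h.lift f x = f i ⟨x, hx⟩ := by
  have hsymm : (LinearEquiv.ofBijective (coeLinearMap A) h).symm x = lof k ι (A ·) i ⟨x, hx⟩ :=
    (LinearEquiv.symm_apply_eq _).2 (coeLinearMap_of A i ⟨x, hx⟩).symm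
  rw [lift, LinearMap.comp_apply, LinearEquiv.coe_coe, hsymm, toModule_lof]

end DirectSum.IsInternal

namespace LinearMap

theorem ext_of_iSup_eq_top {κ k R V W : Type*} [Semiring k] [Semiring R]
    [AddCommMonoid V] [Module k V] [Module R V] [AddCommMonoid W] [Module R W]
    {A : κ → Submodule k V} (hA : iSup A = ⊤) {f g : V →ₗ[R] W}
    (h : ∀ j, ∀ x ∈ A j, f x = g x) : f = g := by
  ext x
  exact Submodule.iSup_induction A (motive := fun x ↦ f x = g x) (hA ▸ Submodule.mem_top) h
    (by simp) fun x y hx hy ↦ by simp only [map_add, hx, hy]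

variable {ι κ k R V W : Type*} [Semiring k] [Semiring R] [Module k R]
  [AddCommMonoid V] [Module k V] [Module R V] [AddCommMonoid W] [Module k W] [Module R W]
  {𝒜 : ι → Submodule k R} {A : κ → Submodule k V}

theorem map_smul_of_iSup_eq_top (h𝒜 : iSup 𝒜 = ⊤) (hA : iSup A = ⊤) (f : V →ₗ[k] W)
    (hf : ∀ i j, ∀ a ∈ 𝒜 i, ∀ x ∈ A j, f (a • x) = a • f x) (a : R) (x : V) :
    f (a • x) = a • f x := by
  refine Submodule.iSup_induction 𝒜 (motive := fun a ↦ f (a • x) = a • f x)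
    (h𝒜 ▸ Submodule.mem_top) (fun i a ha ↦ ?_) (by simp) fun a b ha hb ↦ by
      simp only [add_smul, map_add, ha, hb]
  exact Submodule.iSup_induction A (motive := fun x ↦ f (a • x) = a • f x)
    (hA ▸ Submodule.mem_top) (fun j x hx ↦ hf i j a ha x hx) (by simp) fun x y hx hy ↦ by
      simp only [smul_add, map_add, hx, hy]

noncomputable def ofMapSMulOfISupEqTop (h𝒜 : iSup 𝒜 = ⊤) (hA : iSup A = ⊤) (f : V →ₗ[k] W)
    (hf : ∀ i j, ∀ a ∈ 𝒜 i, ∀ x ∈ A j, f (a • x) = a • f x) : V →ₗ[R] W where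
  toFun := f
  map_add' := f.map_add
  map_smul' := map_smul_of_iSup_eq_top h𝒜 hA f hf

end LinearMap

theorem stmt2_general {k R S T : Type} [Field k] [Ring R] [Algebra k R]
    (𝒜 : ℕ → Submodule k R) [GradedAlgebra 𝒜]
    [AddCommGroup S] [Module R S] [Module k S] [IsScalarTower k R S]
    [AddCommGroup T] [Module R T] [Module k T]
    (ι : ℕ → (S →ₗ[k] T))
    (hinj : ∀ j, Function.Injective (ι j))
    (hdec : DirectSum.IsInternal fun j : ℕ => LinearMap.range (ι j))
    (hact : ∀ (i : ℕ) (a : R), a ∈ 𝒜 i → ∀ (j : ℕ) (x : S), a • (ι j x) = ι (i + j) (a • x)) :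
    ∃ π : T →ₗ[R] S, (∀ (j : ℕ) (x : S), π (ι j x) = x) ∧
      ∀ (M : Type) [AddCommGroup M] [Module R M] [Module k M] [IsScalarTower k R M]
        (ℳ : ℕ → Submodule k M),
        DirectSum.IsInternal ℳ →
        (∀ (i : ℕ) (a : R), a ∈ 𝒜 i → ∀ (j : ℕ), ∀ x ∈ ℳ j, a • x ∈ ℳ (i + j)) →
        ∀ ψ : M →ₗ[R] S,
          ∃! ψ' : M →ₗ[R] T,
            (∀ (j : ℕ), ∀ x ∈ ℳ j, ψ' x ∈ LinearMap.range (ι j)) ∧ ψ = π.comp ψ' := by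
  classical
  have h𝒜 := (DirectSum.Decomposition.isInternal 𝒜).submodule_iSup_eq_top
  let πk : T →ₗ[k] S := hdec.lift fun j ↦ (LinearEquiv.ofInjective (ι j) (hinj j)).symm.toLinearMap
  have hπι (j : ℕ) (x : S) : πk (ι j x) = x := by
    rw [hdec.lift_apply_of_mem _ ⟨x, rfl⟩]
    exact (LinearEquiv.ofInjective (ι j) (hinj j)).symm_apply_apply x
  let π := LinearMap.ofMapSMulOfISupEqTop h𝒜 hdec.submodule_iSup_eq_top πk <| by
    rintro i j a ha _ ⟨x, rfl⟩
    rw [hact i a ha j x, hπι, hπι]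
  refine ⟨π, hπι, fun M _ _ _ _ ℳ hℳ hℳact ψ ↦ ?_⟩
  have hM := hℳ.submodule_iSup_eq_top
  let ψk : M →ₗ[k] T := hℳ.lift fun j ↦ ι j ∘ₗ ψ.restrictScalars k ∘ₗ (ℳ j).subtype
  have hψk (j : ℕ) (x : M) (hx : x ∈ ℳ j) : ψk x = ι j (ψ x) := hℳ.lift_apply_of_mem _ hx
  let ψ' := LinearMap.ofMapSMulOfISupEqTop h𝒜 hM ψk fun i j a ha x hx ↦ by
    rw [hψk _ _ (hℳact i a ha j x hx), hψk j x hx, hact i a ha j, map_smul]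
  refine ⟨ψ', ⟨fun j x hx ↦ ⟨ψ x, (hψk j x hx).symm⟩, ?_⟩, ?_⟩
  · refine LinearMap.ext_of_iSup_eq_top hM fun j x hx ↦ ?_
    change ψ x = πk (ψk x)
    rw [hψk j x hx, hπι]
  · rintro φ ⟨hφ, hψφ⟩
    refine LinearMap.ext_of_iSup_eq_top hM fun j x hx ↦ ?_
    obtain ⟨y, hy⟩ := hφ j x hx
    have hψy : ψ x = y := by rw [hψφ, LinearMap.comp_apply, ← hy]; exact hπι j y
    rw [← hy, ← hψy]
    exact (hψk j x hx).symm

/-- for the graded lift `S~` of a non-trivial finite-dimensional simple module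
`S` (modelled by `T` with embeddings `ι j : S → T` as in the paper), the map
`π(s ⊗ t^j) = s` is an `R`-module homomorphism `T → S` satisfying the universal property:
for every graded left `R`-module `M` with `M_{<0} = 0` and every `R`-module map
`ψ : M → S` there is a unique degree-zero graded homomorphism `ψ' : M → T` with
`ψ = π ∘ ψ'`. -/
theorem stmt2 {k R S T : Type} [Field k] [Ring R] [Algebra k R]
    (𝒜 : ℕ → Submodule k R) [GradedAlgebra 𝒜]
    (hconn : 𝒜 0 = (1 : Submodule k R))
    [AddCommGroup S] [Module R S] [Module k S] [IsScalarTower k R S]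
    [IsSimpleModule R S] [FiniteDimensional k S]
    (hnt : ∃ (i : ℕ) (a : R), 0 < i ∧ a ∈ 𝒜 i ∧ ∃ x : S, a • x ≠ 0)
    [AddCommGroup T] [Module R T] [Module k T] [IsScalarTower k R T]
    (ι : ℕ → (S →ₗ[k] T))
    (hinj : ∀ j, Function.Injective (ι j))
    (hdec : DirectSum.IsInternal fun j : ℕ => LinearMap.range (ι j))
    (hact : ∀ (i : ℕ) (a : R), a ∈ 𝒜 i → ∀ (j : ℕ) (x : S), a • (ι j x) = ι (i + j) (a • x)) :
    ∃ π : T →ₗ[R] S, (∀ (j : ℕ) (x : S), π (ι j x) = x) ∧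
      ∀ (M : Type) [AddCommGroup M] [Module R M] [Module k M] [IsScalarTower k R M]
        (ℳ : ℕ → Submodule k M),
        DirectSum.IsInternal ℳ →
        (∀ (i : ℕ) (a : R), a ∈ 𝒜 i → ∀ (j : ℕ), ∀ x ∈ ℳ j, a • x ∈ ℳ (i + j)) →
        ∀ ψ : M →ₗ[R] S,
          ∃! ψ' : M →ₗ[R] T,
            (∀ (j : ℕ), ∀ x ∈ ℳ j, ψ' x ∈ LinearMap.range (ι j)) ∧ ψ = π.comp ψ' :=
  stmt2_general 𝒜 ι hinj hdec hact
end

section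
/- Let R be a connected graded k-algebra and S a non-trivial finite-dimensional simple left R-module. For every \lambda \in k^\times, the twisted module S^\lambda (same underlying space, new action a * m = \lambda^i a.m for a \in R_i) is a quotient of S~; explicitly S~/(t - \lambda)S~ \cong S^\lambda as R-modules. -/
/-!
Write `S~ = ⨁ j, t ^ j S` via the embeddings `ι j`. The quotient map is evaluation at `t = λ`,
`ι j x ↦ λ ^ j • x`. Since `a ∈ R_i` moves `ι j x` to `ι (i + j) (a • x)`, evaluation turns the
graded action into the `λ`-twisted one. Its kernel is spanned by the elements
`ι j x - λ ^ j • ι 0 x = (t ^ j - λ ^ j) (ι 0 x)`, and `t - λ` divides `t ^ j - λ ^ j`.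
-/

open LinearMap Function

section Spanning

variable {k S T M J : Type*} [CommSemiring k] [AddCommMonoid S] [Module k S]
  [AddCommMonoid T] [Module k T] [AddCommMonoid M] [Module k M] {ι : J → S →ₗ[k] T}

theorem LinearMap.ext_of_iSup_range_eq_top (hspan : ⨆ j, range (ι j) = ⊤) {f g : T →ₗ[k] M}
    (h : ∀ j x, f (ι j x) = g (ι j x)) : f = g := by
  refine ext_on (s := ⋃ j, (range (ι j) : Set T)) ?_ ?_
  · rw [← Submodule.iSup_eq_span, hspan]
  · rintro _ ⟨_, ⟨j, rfl⟩, x, rfl⟩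
    exact h j x

theorem LinearMap.range_le_of_iSup_range_eq_top (hspan : ⨆ j, range (ι j) = ⊤)
    {f : T →ₗ[k] M} {N : Submodule k M} (h : ∀ j x, f (ι j x) ∈ N) : range f ≤ N := by
  rw [range_eq_map, ← hspan, Submodule.map_iSup, iSup_le_iff]
  rintro j _ ⟨_, ⟨x, rfl⟩, rfl⟩
  exact h j x

end Spanning

namespace DirectSum.IsInternal

variable {k S T M J : Type*} [CommSemiring k] [AddCommMonoid S] [Module k S]
  [AddCommMonoid T] [Module k T] [AddCommMonoid M] [Module k M] {ι : J → S →ₗ[k] T}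
  [DecidableEq J]

noncomputable def liftOfInjective (hdec : IsInternal fun j => range (ι j))
    (hinj : ∀ j, Injective (ι j)) (g : J → S →ₗ[k] M) : T →ₗ[k] M :=
  toModule k J M (fun j => g j ∘ₗ (LinearEquiv.ofInjective (ι j) (hinj j)).symm.toLinearMap)
    ∘ₗ (LinearEquiv.ofBijective (coeLinearMap _) hdec).symm.toLinearMap

theorem liftOfInjective_apply (hdec : IsInternal fun j => range (ι j))
    (hinj : ∀ j, Injective (ι j)) (g : J → S →ₗ[k] M) (j : J) (x : S) :
    hdec.liftOfInjective hinj g (ι j x) = g j x := by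
  set e := LinearEquiv.ofBijective (coeLinearMap fun j => range (ι j)) hdec
  have h : e (lof k J _ j (LinearEquiv.ofInjective (ι j) (hinj j) x)) = ι j x := by
    show coeLinearMap (fun j => range (ι j)) _ = _
    simp
  rw [liftOfInjective, LinearMap.comp_apply, LinearEquiv.coe_coe, ← h, e.symm_apply_apply]
  simp

end DirectSum.IsInternal

theorem Module.End.pow_apply_sub_smul_mem_range_sub {k M : Type*} [CommSemiring k]
    [AddCommGroup M] [Module k M] (f : Module.End k M) (c : k) (n : ℕ) (v : M) :
    (f ^ n) v - c ^ n • v ∈ range (f - c • LinearMap.id) := by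
  obtain ⟨g, hg⟩ := ((Commute.one_right f).smul_right c).sub_dvd_pow_sub_pow n
  have hv : (f ^ n - (c • 1 : Module.End k M) ^ n) v = (f ^ n) v - c ^ n • v := by
    simp [smul_pow]
  exact ⟨g v, by rw [← hv, hg]; rfl⟩

section GradedEvaluation

variable {k S T : Type*} [CommSemiring k] [AddCommMonoid S] [Module k S]
  [AddCommMonoid T] [Module k T] {ι : ℕ → S →ₗ[k] T} {p : T →ₗ[k] S} {Λ : k}

theorem map_smul_eq_pow_smul_smul {R : Type*} [Semiring R] [Module R S] [Module R T]
    [SMulCommClass R k S] [SMulCommClass R k T]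
    (hspan : ⨆ j, range (ι j) = ⊤) (hp : ∀ j x, p (ι j x) = Λ ^ j • x)
    {a : R} {i : ℕ} (ha : ∀ j x, a • ι j x = ι (i + j) (a • x)) (y : T) :
    p (a • y) = Λ ^ i • a • p y := by
  have := ext_of_iSup_range_eq_top hspan (f := p ∘ₗ DistribSMul.toLinearMap k T a)
    (g := Λ ^ i • DistribSMul.toLinearMap k S a ∘ₗ p) fun j x => by
      simp [ha, hp, pow_add, mul_smul]
  exact congr($this y)

end GradedEvaluation

section ShiftOperator

variable {k S T : Type*} [CommSemiring k] [AddCommGroup S] [Module k S]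
  [AddCommGroup T] [Module k T] {ι : ℕ → S →ₗ[k] T} {t : Module.End k T}

theorem pow_apply_of_apply_eq_succ (ht : ∀ j x, t (ι j x) = ι (j + 1) x) (j : ℕ) (x : S) :
    (t ^ j) (ι 0 x) = ι j x := by
  induction j with
  | zero => rfl
  | succ j ih => rw [pow_succ', Module.End.mul_apply, ih, ht]

theorem ker_eq_range_sub_smul_id (hspan : ⨆ j, range (ι j) = ⊤) {p : T →ₗ[k] S} {Λ : k}
    (hp : ∀ j x, p (ι j x) = Λ ^ j • x) (ht : ∀ j x, t (ι j x) = ι (j + 1) x) :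
    ker p = range (t - Λ • LinearMap.id) := by
  refine le_antisymm (fun y hy => ?_) (range_le_ker_iff.mpr ?_)
  · -- every `ι j x` is congruent to `ι 0 (p (ι j x)) = Λ ^ j • ι 0 x` modulo the range of `t - Λ`
    have hle : range (LinearMap.id - ι 0 ∘ₗ p) ≤ range (t - Λ • LinearMap.id) :=
      range_le_of_iSup_range_eq_top hspan fun j x => by
        simpa [hp, pow_apply_of_apply_eq_succ ht] using
          t.pow_apply_sub_smul_mem_range_sub Λ j (ι 0 x)
    simpa [show p y = 0 from hy] using hle (mem_range_self _ y)
  · refine ext_of_iSup_range_eq_top hspan fun j x => ?_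
    simp [ht, hp, pow_succ', mul_smul]

end ShiftOperator

theorem stmt3_general {k R S T : Type} [Field k] [Ring R] [Algebra k R]
    (𝒜 : ℕ → Submodule k R)
    [AddCommGroup S] [Module R S] [Module k S] [IsScalarTower k R S]
    [AddCommGroup T] [Module R T] [Module k T] [IsScalarTower k R T]
    (ι : ℕ → (S →ₗ[k] T))
    (hinj : ∀ j, Function.Injective (ι j))
    (hdec : DirectSum.IsInternal fun j : ℕ => LinearMap.range (ι j))
    (hact : ∀ (i : ℕ) (a : R), a ∈ 𝒜 i → ∀ (j : ℕ) (x : S), a • (ι j x) = ι (i + j) (a • x))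
    (tmap : T →ₗ[R] T)
    (htmap : ∀ (j : ℕ) (x : S), tmap (ι j x) = ι (j + 1) x) :
    ∀ lam : kˣ,
      ∃ p : T →ₗ[k] S, Function.Surjective p ∧
        (∀ (j : ℕ) (x : S), p (ι j x) = ((lam : k) ^ j) • x) ∧
        (∀ (i : ℕ) (a : R), a ∈ 𝒜 i → ∀ y : T, p (a • y) = ((lam : k) ^ i) • (a • p y)) ∧
        LinearMap.ker p =
          LinearMap.range (tmap.restrictScalars k - (lam : k) • LinearMap.id) := by
  intro lam
  have hspan := hdec.submodule_iSup_eq_top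
  have hp := hdec.liftOfInjective_apply hinj fun j => (lam : k) ^ j • LinearMap.id
  refine ⟨hdec.liftOfInjective hinj fun j => (lam : k) ^ j • LinearMap.id,
    fun x => ⟨ι 0 x, by simpa using hp 0 x⟩, hp,
    fun i a ha => map_smul_eq_pow_smul_smul hspan hp (hact i a ha),
    ker_eq_range_sub_smul_id hspan hp htmap⟩

/-- for every `λ ∈ k^×`, the twist `S^λ` of a non-trivial finite-dimensional
simple module `S` is a quotient of its graded lift `S~` (modelled by `T` with embeddings
`ι j` and the multiplication-by-`t` map `tmap`); explicitly `S~/(t - λ)S~ ≅ S^λ`.  The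
quotient map `p : T → S` satisfies `p (ι j x) = λ^j • x`, is twisted `R`-linear
(`p (a • y) = λ^i • (a • p y)` for `a ∈ R_i`, which is exactly `R`-linearity into `S^λ`),
and its kernel is the image of `t - λ`. -/
theorem stmt3 {k R S T : Type} [Field k] [Ring R] [Algebra k R]
    (𝒜 : ℕ → Submodule k R) [GradedAlgebra 𝒜]
    (hconn : 𝒜 0 = (1 : Submodule k R))
    [AddCommGroup S] [Module R S] [Module k S] [IsScalarTower k R S]
    [IsSimpleModule R S] [FiniteDimensional k S]
    (hnt : ∃ (i : ℕ) (a : R), 0 < i ∧ a ∈ 𝒜 i ∧ ∃ x : S, a • x ≠ 0)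
    [AddCommGroup T] [Module R T] [Module k T] [IsScalarTower k R T]
    (ι : ℕ → (S →ₗ[k] T))
    (hinj : ∀ j, Function.Injective (ι j))
    (hdec : DirectSum.IsInternal fun j : ℕ => LinearMap.range (ι j))
    (hact : ∀ (i : ℕ) (a : R), a ∈ 𝒜 i → ∀ (j : ℕ) (x : S), a • (ι j x) = ι (i + j) (a • x))
    (tmap : T →ₗ[R] T)
    (htmap : ∀ (j : ℕ) (x : S), tmap (ι j x) = ι (j + 1) x) :
    ∀ lam : kˣ,
      ∃ p : T →ₗ[k] S, Function.Surjective p ∧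
        (∀ (j : ℕ) (x : S), p (ι j x) = ((lam : k) ^ j) • x) ∧
        (∀ (i : ℕ) (a : R), a ∈ 𝒜 i → ∀ y : T, p (a • y) = ((lam : k) ^ i) • (a • p y)) ∧
        LinearMap.ker p =
          LinearMap.range (tmap.restrictScalars k - (lam : k) • LinearMap.id) :=
  stmt3_general 𝒜 ι hinj hdec hact tmap htmap
end

section
/- Let R be a connected graded k-algebra generated in degree 1, and S a 1-dimensional simple left R-module not isomorphic to the trivial module R/m. Then A := R/Ann(S~) is isomorphic as a graded k-algebra to the polynomial ring k[x] with x in degree 1, and S~ is isomorphic as a graded left R-module to R/Ann(S~). -/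
/-!
A one-dimensional module `S` is given by a character `χ : R →ₐ[k] k`, and the grading turns `χ`
into the graded algebra map `a ↦ ∑ χ(aᵢ) Xⁱ` from `R` to `k[X]`. Writing `x₀` for a basis vector
of `S`, the elements `ι j x₀` of `S~` are linearly independent, and `a • ι 0 x₀` is the image of
this polynomial under `Xʲ ↦ ι j x₀`; so `a` kills `ι 0 x₀` exactly when it lies in the kernel.
Since `R` is generated in degree one and `S` is not trivial, some `e ∈ R₁` has `χ e = 1`; it maps
to `X`, giving surjectivity, and `ι j x₀ = eʲ • ι 0 x₀` shows that `ι 0 x₀` generates `S~`.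
-/

open Polynomial

theorem exists_algHom_smul_eq_of_finrank_eq_one {k R S : Type*} [Field k] [Ring R] [Algebra k R]
    [AddCommGroup S] [Module R S] [Module k S] [IsScalarTower k R S]
    (hS : Module.finrank k S = 1) : ∃ χ : R →ₐ[k] k, ∀ (a : R) (x : S), a • x = χ a • x := by
  let scalars : k ≃ₐ[k] Module.End k S := .ofBijective (Algebra.ofId k _)
    (LinearEquiv.smul_id_of_finrank_eq_one hS).bijective
  refine ⟨scalars.symm.toAlgHom.comp (Algebra.lsmul k k S), fun a x => ?_⟩
  exact (LinearMap.congr_fun (scalars.apply_symm_apply (Algebra.lsmul k k S a)) x).symm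

theorem forall_smul_eq_zero_iff_of_span_singleton_eq_top {R M A F : Type*} [Ring R]
    [AddCommGroup M] [Module R M] [MulZeroClass A] [FunLike F R A] [MulHomClass F R A]
    (φ : F) {v : M} (hv : Submodule.span R {v} = ⊤) (hker : ∀ a : R, a • v = 0 ↔ φ a = 0)
    (a : R) : (∀ y : M, a • y = 0) ↔ φ a = 0 := by
  refine ⟨fun h => (hker a).mp (h v), fun ha y => ?_⟩
  obtain ⟨b, rfl⟩ := Submodule.mem_span_singleton.mp (hv ▸ Submodule.mem_top : y ∈ _)
  rw [← mul_smul, hker, map_mul, ha, zero_mul]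

namespace GradedAlgebra

variable {k R : Type*} [Field k] [Ring R] [Algebra k R] (𝒜 : ℕ → Submodule k R) [GradedAlgebra 𝒜]

noncomputable def toPolynomial (χ : R →ₐ[k] k) : R →ₐ[k] k[X] :=
  (DirectSum.toAlgebra k (fun i => 𝒜 i)
      (fun i => (monomial i).comp (χ.toLinearMap.comp (𝒜 i).subtype))
      (by simp [SetLike.coe_gOne])
      (fun ai aj => by simp [SetLike.coe_gMul, monomial_mul_monomial])).comp
    (DirectSum.decomposeAlgEquiv 𝒜).toAlgHom

variable {𝒜}

theorem toPolynomial_of_mem (χ : R →ₐ[k] k) {i : ℕ} {a : R} (ha : a ∈ 𝒜 i) :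
    toPolynomial 𝒜 χ a = monomial i (χ a) := by
  simp only [toPolynomial, AlgHom.comp_apply, AlgEquiv.coe_toAlgHom,
    DirectSum.decomposeAlgEquiv_apply, DirectSum.decompose_of_mem 𝒜 ha]
  exact DirectSum.toAddMonoid_of
    (fun i => ((monomial i).comp (χ.toLinearMap.comp (𝒜 i).subtype)).toAddMonoidHom) i _

theorem toPolynomial_surjective {χ : R →ₐ[k] k} {e : R} (he : e ∈ 𝒜 1) (hχe : χ e = 1) :
    Function.Surjective (toPolynomial 𝒜 χ) := fun p =>
  ⟨aeval e p, by
    rw [← aeval_algHom_apply, toPolynomial_of_mem χ he, hχe, monomial_one_one_eq_X,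
      aeval_X_left_apply]⟩

theorem exists_mem_one_apply_eq_one (hgen : Algebra.adjoin k (𝒜 1 : Set R) = ⊤)
    (χ : R →ₐ[k] k) {i : ℕ} {a : R} (hi : 0 < i) (ha : a ∈ 𝒜 i) (hχa : χ a ≠ 0) :
    ∃ e ∈ 𝒜 1, χ e = 1 := by
  suffices ∃ e ∈ 𝒜 1, χ e ≠ 0 by
    obtain ⟨e, he, hχe⟩ := this
    refine ⟨(χ e)⁻¹ • e, Submodule.smul_mem _ _ he, ?_⟩
    rw [map_smul, smul_eq_mul, inv_mul_cancel₀ hχe]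
  by_contra! hzero
  -- If `χ` kills degree one, `toPolynomial 𝒜 χ` only takes constant values.
  have hconst : (toPolynomial 𝒜 χ).range ≤ ⊥ := by
    rw [← Algebra.map_top, ← hgen, AlgHom.map_adjoin, Algebra.adjoin_le_iff]
    rintro _ ⟨b, hb, rfl⟩
    rw [SetLike.mem_coe, toPolynomial_of_mem χ hb, hzero b hb, map_zero]
    exact zero_mem _
  obtain ⟨c, hc⟩ := Algebra.mem_bot.mp (hconst ⟨a, rfl⟩)
  have hcoeff : (algebraMap k k[X] c).coeff i = (toPolynomial 𝒜 χ a).coeff i :=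
    congr_arg (coeff · i) hc
  rw [algebraMap_eq, coeff_C, if_neg hi.ne', toPolynomial_of_mem χ ha,
    coeff_monomial_same] at hcoeff
  exact hχa hcoeff.symm

end GradedAlgebra

section GradedLift

open GradedAlgebra

variable {k R S T : Type*} [Field k] [Ring R] [Algebra k R] {𝒜 : ℕ → Submodule k R}
  [AddCommGroup S] [Module R S] [Module k S]
  [AddCommGroup T] [Module R T] [Module k T] {ι : ℕ → S →ₗ[k] T}

theorem smul_ι_zero_eq_constr [GradedAlgebra 𝒜]
    (hact : ∀ (i : ℕ) (a : R), a ∈ 𝒜 i → ∀ (j : ℕ) (x : S), a • ι j x = ι (i + j) (a • x))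
    {χ : R →ₐ[k] k} (hχ : ∀ (a : R) (x : S), a • x = χ a • x) (x : S) (a : R) :
    a • ι 0 x = (basisMonomials k).constr k (fun j => ι j x) (toPolynomial 𝒜 χ a) := by
  induction a using DirectSum.Decomposition.inductionOn 𝒜 with
  | zero => simp
  | @homogeneous i a =>
    obtain ⟨a, ha⟩ := a
    have hmono : monomial i (χ a) = χ a • basisMonomials k i := by
      rw [coe_basisMonomials, smul_monomial, smul_eq_mul, mul_one]
    rw [hact _ a ha, hχ, toPolynomial_of_mem χ ha, hmono, map_smul, map_smul,
      Module.Basis.constr_basis, add_zero]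
  | add a b ha hb => rw [add_smul, ha, hb, map_add, map_add]

theorem linearIndependent_ι_apply (hinj : ∀ j, Function.Injective (ι j))
    (hdec : DirectSum.IsInternal fun j => LinearMap.range (ι j)) {x : S} (hx : x ≠ 0) :
    LinearIndependent k fun j => ι j x :=
  hdec.submodule_iSupIndep.linearIndependent _ (fun _ => ⟨x, rfl⟩)
    (fun j => (map_ne_zero_iff _ (hinj j)).mpr hx)

theorem ι_apply_eq_pow_smul
    (hact : ∀ (i : ℕ) (a : R), a ∈ 𝒜 i → ∀ (j : ℕ) (x : S), a • ι j x = ι (i + j) (a • x))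
    {e : R} (he : e ∈ 𝒜 1) {x : S} (hex : e • x = x) (j : ℕ) : ι j x = e ^ j • ι 0 x := by
  induction j with
  | zero => rw [pow_zero, one_smul]
  | succ j ih => rw [pow_succ', mul_smul, ← ih, hact 1 e he, hex, add_comm]

theorem span_singleton_ι_zero_eq_top [IsScalarTower k R T]
    (hdec : DirectSum.IsInternal fun j => LinearMap.range (ι j))
    (hact : ∀ (i : ℕ) (a : R), a ∈ 𝒜 i → ∀ (j : ℕ) (x : S), a • ι j x = ι (i + j) (a • x))
    {x₀ : S} (hx₀ : ∀ x : S, ∃ c : k, c • x₀ = x) {e : R} (he : e ∈ 𝒜 1) (hex : e • x₀ = x₀) :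
    Submodule.span R {ι 0 x₀} = ⊤ := by
  rw [eq_top_iff, ← Submodule.restrictScalars_le k, Submodule.restrictScalars_top,
    ← hdec.submodule_iSup_eq_top, iSup_le_iff]
  rintro j _ ⟨x, rfl⟩
  obtain ⟨c, rfl⟩ := hx₀ x
  rw [map_smul, ι_apply_eq_pow_smul hact he hex j, ← smul_assoc]
  exact Submodule.smul_mem _ _ (Submodule.mem_span_singleton_self _)

theorem smul_ι_zero_eq_zero_iff [GradedAlgebra 𝒜]
    (hact : ∀ (i : ℕ) (a : R), a ∈ 𝒜 i → ∀ (j : ℕ) (x : S), a • ι j x = ι (i + j) (a • x))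
    (hinj : ∀ j, Function.Injective (ι j))
    (hdec : DirectSum.IsInternal fun j => LinearMap.range (ι j))
    {χ : R →ₐ[k] k} (hχ : ∀ (a : R) (x : S), a • x = χ a • x) {x : S} (hx : x ≠ 0) (a : R) :
    a • ι 0 x = 0 ↔ toPolynomial 𝒜 χ a = 0 := by
  rw [smul_ι_zero_eq_constr hact hχ]
  exact map_eq_zero_iff _ <| (basisMonomials k).injective_constr_of_linearIndependent
    (linearIndependent_ι_apply hinj hdec hx)

end GradedLift

theorem stmt4_general {k R S T : Type} [Field k] [Ring R] [Algebra k R]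
    (𝒜 : ℕ → Submodule k R) [GradedAlgebra 𝒜]
    (hgen1 : Algebra.adjoin k ((𝒜 1 : Submodule k R) : Set R) = ⊤)
    [AddCommGroup S] [Module R S] [Module k S] [IsScalarTower k R S]
    (hdim : Module.finrank k S = 1)
    (hnt : ∃ (i : ℕ) (a : R), 0 < i ∧ a ∈ 𝒜 i ∧ ∃ x : S, a • x ≠ 0)
    [AddCommGroup T] [Module R T] [Module k T] [IsScalarTower k R T]
    (ι : ℕ → (S →ₗ[k] T))
    (hinj : ∀ j, Function.Injective (ι j))
    (hdec : DirectSum.IsInternal fun j : ℕ => LinearMap.range (ι j))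
    (hact : ∀ (i : ℕ) (a : R), a ∈ 𝒜 i → ∀ (j : ℕ) (x : S), a • (ι j x) = ι (i + j) (a • x)) :
    (∃ f : R →ₐ[k] Polynomial k, Function.Surjective f ∧
      (∀ (i : ℕ) (a : R), a ∈ 𝒜 i → f a ∈ Submodule.span k {Polynomial.X ^ i}) ∧
      (∀ a : R, f a = 0 ↔ ∀ y : T, a • y = 0)) ∧
    (∃ x0 : S, x0 ≠ 0 ∧ Submodule.span R {ι 0 x0} = ⊤ ∧
      (∀ a : R, a • (ι 0 x0) = 0 ↔ ∀ y : T, a • y = 0) ∧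
      (∀ (i : ℕ) (a : R), a ∈ 𝒜 i → a • (ι 0 x0) ∈ LinearMap.range (ι i))) := by
  obtain ⟨χ, hχ⟩ := exists_algHom_smul_eq_of_finrank_eq_one (R := R) hdim
  obtain ⟨x₀, hx₀, hx₀_spans⟩ := finrank_eq_one_iff'.mp hdim
  obtain ⟨i, a, hi, ha, x, hax⟩ := hnt
  obtain ⟨e, he, hχe⟩ := GradedAlgebra.exists_mem_one_apply_eq_one hgen1 χ hi ha
    fun h => hax (by rw [hχ, h, zero_smul])
  have hex : e • x₀ = x₀ := by rw [hχ, hχe, one_smul]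
  have hspan := span_singleton_ι_zero_eq_top hdec hact hx₀_spans he hex
  have hker := smul_ι_zero_eq_zero_iff hact hinj hdec hχ hx₀
  have hann := forall_smul_eq_zero_iff_of_span_singleton_eq_top _ hspan hker
  refine ⟨⟨GradedAlgebra.toPolynomial 𝒜 χ, GradedAlgebra.toPolynomial_surjective he hχe,
      fun i a ha => ?_, fun a => (hann a).symm⟩,
    ⟨x₀, hx₀, hspan, fun a => (hker a).trans (hann a).symm, fun i a ha => ⟨a • x₀, ?_⟩⟩⟩
  · rw [GradedAlgebra.toPolynomial_of_mem χ ha, ← smul_X_eq_monomial]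
    exact Submodule.smul_mem _ _ (Submodule.mem_span_singleton_self _)
  · rw [hact i a ha 0, add_zero]

/-- if `R` is a connected graded `k`-algebra generated in degree 1 and `S` is a
1-dimensional simple left `R`-module which is non-trivial (not the trivial module `R/m`),
then `R/Ann(S~)` is isomorphic as a graded `k`-algebra to the polynomial ring `k[x]` with
`x` in degree 1 (expressed by a surjective graded algebra map `R → k[x]` whose kernel is
the annihilator of `S~`), and `S~` is isomorphic as a graded left `R`-module to
`R/Ann(S~)` (expressed by a homogeneous degree-zero cyclic generator of `S~` whose
annihilator equals that of `S~`).  Here `S~` is modelled by `T` with embeddings `ι j`. -/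
theorem stmt4 {k R S T : Type} [Field k] [Ring R] [Algebra k R]
    (𝒜 : ℕ → Submodule k R) [GradedAlgebra 𝒜]
    (hconn : 𝒜 0 = (1 : Submodule k R))
    (hgen1 : Algebra.adjoin k ((𝒜 1 : Submodule k R) : Set R) = ⊤)
    [AddCommGroup S] [Module R S] [Module k S] [IsScalarTower k R S]
    [IsSimpleModule R S] (hdim : Module.finrank k S = 1)
    (hnt : ∃ (i : ℕ) (a : R), 0 < i ∧ a ∈ 𝒜 i ∧ ∃ x : S, a • x ≠ 0)
    [AddCommGroup T] [Module R T] [Module k T] [IsScalarTower k R T]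
    (ι : ℕ → (S →ₗ[k] T))
    (hinj : ∀ j, Function.Injective (ι j))
    (hdec : DirectSum.IsInternal fun j : ℕ => LinearMap.range (ι j))
    (hact : ∀ (i : ℕ) (a : R), a ∈ 𝒜 i → ∀ (j : ℕ) (x : S), a • (ι j x) = ι (i + j) (a • x)) :
    (∃ f : R →ₐ[k] Polynomial k, Function.Surjective f ∧
      (∀ (i : ℕ) (a : R), a ∈ 𝒜 i → f a ∈ Submodule.span k {Polynomial.X ^ i}) ∧
      (∀ a : R, f a = 0 ↔ ∀ y : T, a • y = 0)) ∧
    (∃ x0 : S, x0 ≠ 0 ∧ Submodule.span R {ι 0 x0} = ⊤ ∧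
      (∀ a : R, a • (ι 0 x0) = 0 ↔ ∀ y : T, a • y = 0) ∧
      (∀ (i : ℕ) (a : R), a ∈ 𝒜 i → a • (ι 0 x0) ∈ LinearMap.range (ι i))) :=
  stmt4_general 𝒜 hgen1 hdim hnt ι hinj hdec hact
end

section
/- Let R = C\langle x, y \rangle / (x^2, xy) with x, y in degree 1, and let M = R/Rx and N = R/Ry. Then M and N are non-isomorphic point modules (each has Hilbert series (1-t)^{-1}), yet M_{\ge 1} \cong M(-1) \cong N_{\ge 1} as graded R-modules; in particular M and N become isomorphic in the quotient of graded modules by finite-dimensional ones. -/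
/-!
In `R` one has `x R ⊆ R x` because `x² = xy = 0`, so `x` acts by zero on `M`, whereas `x · 1̄ ≠ 0`
in `N`; hence `M ≇ N`. The classes of `yʲ` in `M`, and of `1` and `yʲx` in `N`, span because they
span an `R`-stable subspace containing `1̄`, and they are linearly independent because their images
in `ℂ[X]` are the monomials, for the representations `x ↦ 0`, `y ↦ X·` (for `M`) and
`x ↦ (p ↦ p(0) X)`, `y ↦ (p ↦ X p - p(0) X)` (for `N`). As `x` kills `ȳ ∈ M` and `x̄ ∈ N`,
`r̄ ↦ r ȳ` and `r̄ ↦ r x̄` are `R`-linear maps out of `M`; they send the basis vector of degree `j`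
to the one of degree `j + 1`, so they are isomorphisms `M(-1) ≅ M_{≥1}` and `M(-1) ≅ N_{≥1}`.
-/

/-- The defining relations `x² = 0`, `xy = 0` of the algebra `C⟨x,y⟩/(x², xy)`. -/
inductive vancliffRel : FreeAlgebra ℂ (Fin 2) → FreeAlgebra ℂ (Fin 2) → Prop
  | sq : vancliffRel (FreeAlgebra.ι ℂ 0 * FreeAlgebra.ι ℂ 0) 0
  | xy : vancliffRel (FreeAlgebra.ι ℂ 0 * FreeAlgebra.ι ℂ 1) 0

/-- The algebra `R = C⟨x,y⟩/(x², xy)`. -/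
abbrev VancliffAlg : Type := RingQuot vancliffRel

/-- The image of `x` in `R`. -/
noncomputable def vX : VancliffAlg := RingQuot.mkAlgHom ℂ vancliffRel (FreeAlgebra.ι ℂ 0)

/-- The image of `y` in `R`. -/
noncomputable def vY : VancliffAlg := RingQuot.mkAlgHom ℂ vancliffRel (FreeAlgebra.ι ℂ 1)

/-- The point module `M = R/Rx`. -/
abbrev VM : Type := VancliffAlg ⧸ (Ideal.span {vX} : Ideal VancliffAlg)

/-- The point module `N = R/Ry`. -/
abbrev VN : Type := VancliffAlg ⧸ (Ideal.span {vY} : Ideal VancliffAlg)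

/-- The grading of `M = R/Rx`: `M_j = C·y̅ʲ`. -/
noncomputable def gradM : ℕ → Submodule ℂ VM := fun j =>
  Submodule.span ℂ {(Ideal.span {vX} : Ideal VancliffAlg).mkQ (vY ^ j)}

/-- The grading of `N = R/Ry`: `N_0 = C·1̅` and `N_{j+1} = C·(y̅ʲ x̅)`. -/
noncomputable def gradN : ℕ → Submodule ℂ VN
  | 0 => Submodule.span ℂ {(Ideal.span {vY} : Ideal VancliffAlg).mkQ 1}
  | (j + 1) => Submodule.span ℂ {(Ideal.span {vY} : Ideal VancliffAlg).mkQ (vY ^ j * vX)}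

/-- The tail `M_{≥1}` of a graded module with grading `ℳ`. -/
noncomputable def tail1 {P : Type} [AddCommGroup P] [Module VancliffAlg P] [Module ℂ P]
    (ℳ : ℕ → Submodule ℂ P) : Submodule VancliffAlg P :=
  Submodule.span VancliffAlg (⋃ j ∈ Set.Ici 1, (ℳ j : Set P))

open Polynomial

section QuotientByLeftIdeal

variable {k A : Type*} [CommRing k] [Ring A] [Algebra k A]

theorem Ideal.smul_mkQ (I : Ideal A) (r s : A) : r • I.mkQ s = I.mkQ (r * s) := by
  rw [← map_smul, smul_eq_mul]

theorem Ideal.span_singleton_mkQ_one (I : Ideal A) : Submodule.span A {I.mkQ 1} = ⊤ := by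
  refine eq_top_iff.2 fun m _ => ?_
  obtain ⟨r, rfl⟩ := I.mkQ_surjective m
  exact Submodule.mem_span_singleton.2 ⟨r, by rw [Ideal.smul_mkQ, mul_one]⟩

theorem Ideal.linearIndependent_mkQ_of_apply {V ι : Type*} [AddCommGroup V] [Module k V]
    (φ : A →ₐ[k] Module.End k V) (v : V) {g : A} (hg : φ g v = 0) {a : ι → A}
    (ha : LinearIndependent k fun j => φ (a j) v) :
    LinearIndependent k fun j => (Ideal.span {g}).mkQ (a j) := by
  let F : (A ⧸ Ideal.span {g}) →ₗ[k] V :=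
    ((Ideal.span {g}).restrictScalars k).liftQ ((LinearMap.applyₗ v).comp φ.toLinearMap)
      (fun i hi => by
        obtain ⟨s, rfl⟩ := Ideal.mem_span_singleton'.1 hi
        simp [hg]) ∘ₗ
    (Submodule.Quotient.restrictScalarsEquiv k (Ideal.span {g})).symm.toLinearMap
  exact LinearIndependent.of_comp F ha

end QuotientByLeftIdeal

namespace VancliffAlg

theorem vX_mul_vX : vX * vX = 0 := by
  rw [vX, ← map_mul]
  simpa using RingQuot.mkAlgHom_rel ℂ vancliffRel.sq

theorem vX_mul_vY : vX * vY = 0 := by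
  rw [vX, vY, ← map_mul]
  simpa using RingQuot.mkAlgHom_rel ℂ vancliffRel.xy

noncomputable def lift {S : Type*} [Semiring S] [Algebra ℂ S] (a b : S) (haa : a * a = 0)
    (hab : a * b = 0) : VancliffAlg →ₐ[ℂ] S :=
  RingQuot.liftAlgHom ℂ ⟨FreeAlgebra.lift ℂ ![a, b], by rintro _ _ (_ | _) <;> simp [haa, hab]⟩

section Lift

variable {S : Type*} [Semiring S] [Algebra ℂ S] {a b : S} (haa : a * a = 0) (hab : a * b = 0)

@[simp] theorem lift_vX : lift a b haa hab vX = a := by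
  simp [lift, vX]

@[simp] theorem lift_vY : lift a b haa hab vY = b := by
  simp [lift, vY]

end Lift

variable {P : Type*} [AddCommGroup P] [Module VancliffAlg P] [Module ℂ P]
  [IsScalarTower ℂ VancliffAlg P]

theorem smul_mem_of_vX_vY_smul_mem (W : Submodule ℂ P) (hx : ∀ w ∈ W, vX • w ∈ W)
    (hy : ∀ w ∈ W, vY • w ∈ W) (r : VancliffAlg) : ∀ w ∈ W, r • w ∈ W := by
  obtain ⟨a, rfl⟩ := RingQuot.mkAlgHom_surjective ℂ vancliffRel r
  induction a using FreeAlgebra.induction with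
  | grade0 c => intro w hw; rw [AlgHom.commutes, algebraMap_smul]; exact W.smul_mem c hw
  | grade1 i => fin_cases i; exacts [hx, hy]
  | mul a b ha hb => intro w hw; rw [map_mul, mul_smul]; exact ha _ (hb _ hw)
  | add a b ha hb => intro w hw; rw [map_add, add_smul]; exact add_mem (ha _ hw) (hb _ hw)

theorem vX_mul_mem_span_vX (r : VancliffAlg) : vX * r ∈ Ideal.span {vX} := by
  let W := ((Ideal.span {vX}).restrictScalars ℂ).comap (LinearMap.mulLeft ℂ vX)
  have hWx : ∀ w ∈ W, vX • w ∈ W := fun w _ => by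
    simp [W, ← mul_assoc, vX_mul_vX]
  have hWy : ∀ w ∈ W, vY • w ∈ W := fun w _ => by
    simp [W, ← mul_assoc, vX_mul_vY]
  simpa [W] using smul_mem_of_vX_vY_smul_mem W hWx hWy r 1 (by simp [W])

end VancliffAlg

section PointModules

variable {P : Type} [AddCommGroup P] [Module VancliffAlg P] [Module ℂ P]

def IsPointGrading (gr : ℕ → Submodule ℂ P) : Prop :=
  DirectSum.IsInternal gr ∧ (∀ j, Module.finrank ℂ (gr j) = 1) ∧
    Submodule.span VancliffAlg (gr 0 : Set P) = ⊤ ∧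
    ∀ j, ∀ v ∈ gr j, vX • v ∈ gr (j + 1) ∧ vY • v ∈ gr (j + 1)

variable [IsScalarTower ℂ VancliffAlg P]

theorem smul_mem_span_singleton_of_smul_mem {r : VancliffAlg} {b b' : P}
    (h : r • b ∈ ℂ ∙ b') {v : P} (hv : v ∈ ℂ ∙ b) : r • v ∈ ℂ ∙ b' := by
  obtain ⟨c, rfl⟩ := Submodule.mem_span_singleton.1 hv
  rw [smul_comm]
  exact Submodule.smul_mem _ c h

theorem span_range_eq_top_of_shift (b : ℕ → P) (hgen : Submodule.span VancliffAlg {b 0} = ⊤)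
    (hx : ∀ j, vX • b j ∈ ℂ ∙ b (j + 1)) (hy : ∀ j, vY • b j ∈ ℂ ∙ b (j + 1)) :
    Submodule.span ℂ (Set.range b) = ⊤ := by
  have stable (r : VancliffAlg) (hr : ∀ j, r • b j ∈ ℂ ∙ b (j + 1)) :
      ∀ w ∈ Submodule.span ℂ (Set.range b), r • w ∈ Submodule.span ℂ (Set.range b) := by
    intro w hw
    refine Submodule.span_le (p := (Submodule.span ℂ (Set.range b)).comap
      (DistribSMul.toLinearMap ℂ P r)) |>.2 ?_ hw
    rintro _ ⟨j, rfl⟩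
    exact Submodule.span_mono (Set.singleton_subset_iff.2 (Set.mem_range_self (j + 1))) (hr j)
  refine eq_top_iff.2 fun m _ => ?_
  obtain ⟨r, rfl⟩ := Submodule.mem_span_singleton.1 (hgen ▸ Submodule.mem_top : m ∈ _)
  exact VancliffAlg.smul_mem_of_vX_vY_smul_mem _ (stable vX hx) (stable vY hy) r _
    (Submodule.subset_span ⟨0, rfl⟩)

theorem isPointGrading_span_singleton (b : ℕ → P) (hli : LinearIndependent ℂ b)
    (hgen : Submodule.span VancliffAlg {b 0} = ⊤)
    (hx : ∀ j, vX • b j ∈ ℂ ∙ b (j + 1)) (hy : ∀ j, vY • b j ∈ ℂ ∙ b (j + 1)) :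
    IsPointGrading fun j => ℂ ∙ b j := by
  refine ⟨?_, fun j => finrank_span_singleton (hli.ne_zero j), ?_, fun j v hv =>
    ⟨smul_mem_span_singleton_of_smul_mem (hx j) hv, smul_mem_span_singleton_of_smul_mem (hy j) hv⟩⟩
  · rw [DirectSum.isInternal_submodule_iff_iSupIndep_and_iSup_eq_top]
    exact ⟨hli.iSupIndep_span_singleton, by
      rw [← Submodule.span_range_eq_iSup, span_range_eq_top_of_shift b hgen hx hy]⟩
  · exact eq_top_iff.2 (hgen ▸ Submodule.span_mono (Set.singleton_subset_iff.2
      (Submodule.mem_span_singleton_self (b 0))))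

end PointModules

noncomputable def polyRepM : VancliffAlg →ₐ[ℂ] Module.End ℂ ℂ[X] :=
  VancliffAlg.lift 0 (Algebra.lmul ℂ ℂ[X] X) (zero_mul _) (zero_mul _)

noncomputable def coeffZeroX : Module.End ℂ ℂ[X] := (lcoeff ℂ 0).smulRight X

noncomputable def mulXSubCoeffZeroX : Module.End ℂ ℂ[X] := Algebra.lmul ℂ ℂ[X] X - coeffZeroX

theorem coeffZeroX_apply (p : ℂ[X]) : coeffZeroX p = p.coeff 0 • X := rfl

theorem mulXSubCoeffZeroX_apply (p : ℂ[X]) : mulXSubCoeffZeroX p = X * p - p.coeff 0 • X := rfl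

theorem coeffZeroX_mul_coeffZeroX : coeffZeroX * coeffZeroX = 0 :=
  LinearMap.ext fun p => by simp [coeffZeroX_apply]

theorem coeffZeroX_mul_mulXSubCoeffZeroX : coeffZeroX * mulXSubCoeffZeroX = 0 :=
  LinearMap.ext fun p => by simp [coeffZeroX_apply, mulXSubCoeffZeroX_apply]

theorem mulXSubCoeffZeroX_pow_apply_X (j : ℕ) : (mulXSubCoeffZeroX ^ j) X = X ^ (j + 1) := by
  induction j with
  | zero => simp
  | succ j ih => simp [pow_succ', ih, mulXSubCoeffZeroX_apply, coeff_X_pow, pow_succ']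

noncomputable def polyRepN : VancliffAlg →ₐ[ℂ] Module.End ℂ ℂ[X] :=
  VancliffAlg.lift coeffZeroX mulXSubCoeffZeroX coeffZeroX_mul_coeffZeroX
    coeffZeroX_mul_mulXSubCoeffZeroX

noncomputable def bM (j : ℕ) : VM := (Ideal.span {vX}).mkQ (vY ^ j)

noncomputable def wordN : ℕ → VancliffAlg
  | 0 => 1
  | j + 1 => vY ^ j * vX

noncomputable def bN (j : ℕ) : VN := (Ideal.span {vY}).mkQ (wordN j)

theorem gradN_eq : gradN = fun j => ℂ ∙ bN j := by
  funext j
  cases j <;> rfl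

theorem linearIndependent_X_pow : LinearIndependent ℂ fun j : ℕ => (X : ℂ[X]) ^ j := by
  simpa [coe_basisMonomials, X_pow_eq_monomial] using (basisMonomials ℂ).linearIndependent

theorem polyRepM_vY_pow_apply_one (j : ℕ) : polyRepM (vY ^ j) 1 = X ^ j := by
  rw [polyRepM, map_pow, VancliffAlg.lift_vY, ← map_pow]
  simp

theorem polyRepN_wordN_apply_one (j : ℕ) : polyRepN (wordN j) 1 = X ^ j := by
  cases j <;> simp [wordN, polyRepN, coeffZeroX_apply, mulXSubCoeffZeroX_pow_apply_X]

theorem linearIndependent_bM : LinearIndependent ℂ bM :=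
  Ideal.linearIndependent_mkQ_of_apply polyRepM 1 (by simp [polyRepM])
    (by simpa only [polyRepM_vY_pow_apply_one] using linearIndependent_X_pow)

theorem linearIndependent_bN : LinearIndependent ℂ bN :=
  Ideal.linearIndependent_mkQ_of_apply polyRepN 1 (by simp [polyRepN, mulXSubCoeffZeroX_apply])
    (by simpa only [polyRepN_wordN_apply_one] using linearIndependent_X_pow)

theorem vX_smul_VM (m : VM) : vX • m = 0 := by
  obtain ⟨r, rfl⟩ := (Ideal.span {vX}).mkQ_surjective m
  rw [Ideal.smul_mkQ, Submodule.mkQ_apply, Submodule.Quotient.mk_eq_zero]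
  exact VancliffAlg.vX_mul_mem_span_vX r

theorem vY_smul_bM (j : ℕ) : vY • bM j = bM (j + 1) := by
  rw [bM, bM, Ideal.smul_mkQ, ← pow_succ']

theorem span_singleton_bM_zero : Submodule.span VancliffAlg {bM 0} = ⊤ := by
  rw [bM, pow_zero, Ideal.span_singleton_mkQ_one]

theorem span_range_bM : Submodule.span ℂ (Set.range bM) = ⊤ :=
  span_range_eq_top_of_shift bM span_singleton_bM_zero
    (fun j => by rw [vX_smul_VM]; exact zero_mem _)
    (fun j => by rw [vY_smul_bM]; exact Submodule.mem_span_singleton_self _)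

theorem vX_smul_bN_zero : vX • bN 0 = bN 1 := by
  rw [bN, bN, Ideal.smul_mkQ, wordN, wordN, mul_one, pow_zero, one_mul]

theorem vX_smul_bN_succ (j : ℕ) : vX • bN (j + 1) = 0 := by
  rw [bN, Ideal.smul_mkQ, wordN, ← mul_assoc]
  cases j with
  | zero => rw [pow_zero, mul_one, VancliffAlg.vX_mul_vX, map_zero]
  | succ j => rw [pow_succ', ← mul_assoc, VancliffAlg.vX_mul_vY, zero_mul, zero_mul, map_zero]

theorem vY_smul_bN_zero : vY • bN 0 = 0 := by
  rw [bN, Ideal.smul_mkQ, wordN, mul_one, Submodule.mkQ_apply, Submodule.Quotient.mk_eq_zero]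
  exact Ideal.mem_span_singleton_self vY

theorem vY_smul_bN_succ (j : ℕ) : vY • bN (j + 1) = bN (j + 2) := by
  rw [bN, bN, Ideal.smul_mkQ, wordN, wordN, ← mul_assoc, ← pow_succ']

theorem span_singleton_bN_zero : Submodule.span VancliffAlg {bN 0} = ⊤ := by
  rw [bN, wordN, Ideal.span_singleton_mkQ_one]

theorem isPointGrading_gradM : IsPointGrading gradM :=
  isPointGrading_span_singleton bM linearIndependent_bM span_singleton_bM_zero
    (fun j => by rw [vX_smul_VM]; exact zero_mem _)
    (fun j => by rw [vY_smul_bM]; exact Submodule.mem_span_singleton_self _)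

theorem isPointGrading_gradN : IsPointGrading gradN := by
  rw [gradN_eq]
  refine isPointGrading_span_singleton bN linearIndependent_bN span_singleton_bN_zero
    (fun j => ?_) (fun j => ?_) <;> cases j
  · rw [vX_smul_bN_zero]; exact Submodule.mem_span_singleton_self _
  · rw [vX_smul_bN_succ]; exact zero_mem _
  · rw [vY_smul_bN_zero]; exact zero_mem _
  · rw [vY_smul_bN_succ]; exact Submodule.mem_span_singleton_self _

theorem not_nonempty_VM_equiv_VN : ¬ Nonempty (VM ≃ₗ[VancliffAlg] VN) := by
  rintro ⟨e⟩
  have h : vX • bN 0 = 0 := by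
    simpa using congrArg e (vX_smul_VM (e.symm (bN 0)))
  rw [vX_smul_bN_zero] at h
  exact linearIndependent_bN.ne_zero 1 h

section Tail

variable {P : Type} [AddCommGroup P] [Module VancliffAlg P] {b : ℕ → P}

theorem vY_pow_smul_eq_of_shift (hy : ∀ j, vY • b (j + 1) = b (j + 2)) (j : ℕ) :
    vY ^ j • b 1 = b (j + 1) := by
  induction j with
  | zero => rw [pow_zero, one_smul]
  | succ j ih => rw [pow_succ', mul_smul, ih, hy]

variable [Module ℂ P] [IsScalarTower ℂ VancliffAlg P]

theorem tail1_span_singleton_eq (hy : ∀ j, vY • b (j + 1) = b (j + 2)) :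
    tail1 (fun j => ℂ ∙ b j) = Submodule.span VancliffAlg {b 1} := by
  refine le_antisymm (Submodule.span_le.2 ?_) (Submodule.span_le.2 ?_)
  · simp only [Set.iUnion_subset_iff, Set.mem_Ici]
    intro j hj v hv
    obtain ⟨i, rfl⟩ := Nat.exists_eq_add_of_le' hj
    obtain ⟨c, rfl⟩ := Submodule.mem_span_singleton.1 hv
    rw [← vY_pow_smul_eq_of_shift hy i]
    exact Submodule.smul_of_tower_mem _ c
      (Submodule.smul_mem _ _ (Submodule.mem_span_singleton_self _))
  · rw [Set.singleton_subset_iff]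
    exact Submodule.subset_span
      (Set.mem_biUnion (Set.mem_Ici.2 le_rfl) (Submodule.mem_span_singleton_self (b 1)))

theorem exists_tail1_equiv_VM (hli : LinearIndependent ℂ b) (hx : vX • b 1 = 0)
    (hy : ∀ j, vY • b (j + 1) = b (j + 2)) :
    ∃ f : ↥(tail1 fun j => ℂ ∙ b j) ≃ₗ[VancliffAlg] VM, ∀ j : ℕ, 1 ≤ j →
      ∀ v : ↥(tail1 fun j => ℂ ∙ b j), (v : P) ∈ ℂ ∙ b j → f v ∈ gradM (j - 1) := by
  let ψ : VM →ₗ[VancliffAlg] P := (Ideal.span {vX}).liftQ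
    (LinearMap.toSpanSingleton VancliffAlg P (b 1)) ((Submodule.span_singleton_le_iff_mem _ _).2 hx)
  have hψ (j : ℕ) : ψ (bM j) = b (j + 1) := vY_pow_smul_eq_of_shift hy j
  have hinj : Function.Injective ψ :=
    LinearMap.injective_of_linearIndependent (f := ψ.restrictScalars ℂ) span_range_bM
      (by simpa [Function.comp_def, hψ] using hli.comp _ Nat.succ_injective)
  have hrange : LinearMap.range ψ = tail1 fun j => ℂ ∙ b j := by
    rw [Submodule.range_liftQ, ← LinearMap.span_singleton_eq_range, tail1_span_singleton_eq hy]
  refine ⟨((LinearEquiv.ofInjective ψ hinj).trans (LinearEquiv.ofEq _ _ hrange)).symm, ?_⟩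
  intro j hj v hv
  obtain ⟨i, rfl⟩ := Nat.exists_eq_add_of_le' hj
  obtain ⟨c, hc⟩ := Submodule.mem_span_singleton.1 hv
  have hv' : v = (LinearEquiv.ofInjective ψ hinj).trans (LinearEquiv.ofEq _ _ hrange) (c • bM i) :=
    Subtype.ext (by simp [hψ, hc])
  rw [hv', LinearEquiv.symm_apply_apply, Nat.add_sub_cancel]
  exact Submodule.smul_mem _ c (Submodule.mem_span_singleton_self _)

end Tail

/-- `M = R/Rx` and `N = R/Ry` are non-isomorphic point modules over
`R = C⟨x,y⟩/(x², xy)` (each with Hilbert series `(1-t)^{-1}`), yet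
`M_{≥1} ≅ M(-1) ≅ N_{≥1}` as graded `R`-modules. -/
theorem stmt9 :
    (DirectSum.IsInternal gradM ∧ (∀ j, Module.finrank ℂ ↥(gradM j) = 1) ∧
      Submodule.span VancliffAlg ((gradM 0 : Set VM)) = ⊤ ∧
      (∀ j, ∀ v ∈ gradM j, vX • v ∈ gradM (j + 1) ∧ vY • v ∈ gradM (j + 1))) ∧
    (DirectSum.IsInternal gradN ∧ (∀ j, Module.finrank ℂ ↥(gradN j) = 1) ∧
      Submodule.span VancliffAlg ((gradN 0 : Set VN)) = ⊤ ∧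
      (∀ j, ∀ v ∈ gradN j, vX • v ∈ gradN (j + 1) ∧ vY • v ∈ gradN (j + 1))) ∧
    (¬ Nonempty (VM ≃ₗ[VancliffAlg] VN)) ∧
    (∃ f : ↥(tail1 gradM) ≃ₗ[VancliffAlg] VM,
      ∀ j : ℕ, 1 ≤ j → ∀ v : ↥(tail1 gradM), (v : VM) ∈ gradM j → f v ∈ gradM (j - 1)) ∧
    (∃ g : ↥(tail1 gradN) ≃ₗ[VancliffAlg] VM,
      ∀ j : ℕ, 1 ≤ j → ∀ v : ↥(tail1 gradN), (v : VN) ∈ gradN j → g v ∈ gradM (j - 1)) := by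
  refine ⟨isPointGrading_gradM, isPointGrading_gradN, not_nonempty_VM_equiv_VN,
    exists_tail1_equiv_VM linearIndependent_bM (vX_smul_VM _) fun j => vY_smul_bM (j + 1), ?_⟩
  rw [gradN_eq]
  exact exists_tail1_equiv_VM linearIndependent_bN (vX_smul_bN_succ 0) vY_smul_bN_succ
end
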